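/- arXiv:2107.14786 — 2 statements merged into one kernel-verified Lean document; each statement's English description precedes it below -/
import Mathlib

section
/- Let $t : \mathbf{N} \to [0,\infty)$, $b : \mathbf{N} \to \mathbf{R}$, $\lambda > 0$, $c \in \mathbf{R}$, and $\delta > 0$. Suppose $\sum_k t_k$ and $\sum_k t_k e^{-2\lambda b_k}$ converge with $\sum_k t_k \le 4$ and $\sum_k t_k e^{-2\lambda b_k} \le \frac{1}{4}e^{-2c\lambda}$, and that $|\lambda b_k - \ln 4 - c\lambda| \ge \delta$ for every $k$ with $t_k > 0$. Then $\sum_k t_k e^{-\lambda b_k} \le \frac{e^{-c\lambda}}{1 + \delta^2/2}$. -/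
-- quadratic lower bound on cosh
lemma cosh_quad (x : ℝ) : 1 + x ^ 2 / 2 ≤ Real.cosh x := by
  have h : Real.cosh x = 2 * Real.sinh (x / 2) ^ 2 + 1 := by
    have := Real.cosh_two_mul (x / 2)
    have h2 : Real.cosh (x/2) ^ 2 = Real.sinh (x/2) ^ 2 + 1 := Real.cosh_sq (x/2)
    rw [show 2 * (x/2) = x by ring] at this
    rw [this, h2]; ring
  have hx : |x / 2| ≤ Real.sinh (x/2) ∨ |x/2| ≤ -Real.sinh (x/2) := by
    rcases le_or_gt 0 x with hx0 | hx0
    · left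
      rw [abs_of_nonneg (by linarith)]
      exact (Real.self_le_sinh_iff.2 (by linarith))
    · right
      rw [abs_of_neg (by linarith), ← Real.sinh_neg]
      exact Real.self_le_sinh_iff.2 (by linarith)
  have hsq : (x/2) ^ 2 ≤ Real.sinh (x/2) ^ 2 := by
    rcases hx with h' | h'
    · calc (x/2)^2 = |x/2|^2 := (sq_abs _).symm
        _ ≤ Real.sinh (x/2)^2 := pow_le_pow_left₀ (abs_nonneg _) h' 2
    · calc (x/2)^2 = |x/2|^2 := (sq_abs _).symm
        _ ≤ (-Real.sinh (x/2))^2 := pow_le_pow_left₀ (abs_nonneg _) h' 2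
        _ = Real.sinh (x/2)^2 := by ring
  nlinarith [hsq]

lemma pointwise (δ x : ℝ) (hδ0 : 0 ≤ δ) (hδx : δ ≤ |x|) :
    (1 + δ ^ 2 / 2) * Real.exp (-x) ≤ (1 + Real.exp (-2 * x)) / 2 := by
  have hc : 1 + δ ^ 2 / 2 ≤ Real.cosh x := by
    calc 1 + δ ^ 2 / 2 ≤ Real.cosh δ := cosh_quad δ
      _ ≤ Real.cosh x := Real.cosh_le_cosh.2 (by rwa [abs_of_nonneg hδ0])
  have e1 : Real.exp x * Real.exp (-x) = 1 := by rw [← Real.exp_add]; simp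
  have e2 : Real.exp (-x) * Real.exp (-x) = Real.exp (-2*x) := by
    rw [← Real.exp_add]; ring_nf
  have hcosh : Real.cosh x * Real.exp (-x) = (1 + Real.exp (-2*x)) / 2 := by
    rw [Real.cosh_eq, div_mul_eq_mul_div, add_mul, e1, e2]
  calc (1 + δ^2/2) * Real.exp (-x) ≤ Real.cosh x * Real.exp (-x) :=
        mul_le_mul_of_nonneg_right hc (Real.exp_pos _).le
    _ = (1 + Real.exp (-2*x)) / 2 := hcosh

theorem stmt_6 (t : ℕ → ℝ) (ht : ∀ k, 0 ≤ t k) (b : ℕ → ℝ) (lam : ℝ) (hlam : 0 < lam)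
    (c δ : ℝ) (hδ : 0 < δ)
    (hsum1 : Summable t) (hsum2 : Summable (fun k => t k * Real.exp (-2 * lam * b k)))
    (h1 : ∑' k, t k ≤ 4)
    (h2 : ∑' k, t k * Real.exp (-2 * lam * b k) ≤ (1 / 4) * Real.exp (-2 * c * lam))
    (hsep : ∀ k, 0 < t k → δ ≤ |lam * b k - Real.log 4 - c * lam|) :
    ∑' k, t k * Real.exp (-lam * b k) ≤ Real.exp (-c * lam) / (1 + δ ^ 2 / 2) := by
  set A : ℝ := Real.exp (-c * lam) / 4 with hA
  have hApos : 0 < A := by positivity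
  have hD : (0:ℝ) < 1 + δ ^ 2 / 2 := by positivity
  set g : ℕ → ℝ := fun k => (A * t k + t k * Real.exp (-2 * lam * b k) / A) / (2 * (1 + δ^2/2))
    with hg
  have hgsum : Summable g := by
    apply Summable.div_const
    exact ((hsum1.mul_left A).add (hsum2.div_const A))
  have hle : ∀ k, t k * Real.exp (-lam * b k) ≤ g k := by
    intro k
    rcases (ht k).lt_or_eq with hk | hk
    · -- t k > 0
      set x : ℝ := lam * b k - Real.log 4 - c * lam with hx
      have hxsep := hsep k hk
      have key : (1 + δ^2/2) * Real.exp (-x) ≤ (1 + Real.exp (-2*x)) / 2 :=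
        pointwise δ x hδ.le hxsep
      have h4 : (4:ℝ) = Real.exp (Real.log 4) := (Real.exp_log (by norm_num)).symm
      have hexp : Real.exp (-lam * b k) = A * Real.exp (-x) := by
        rw [hA, hx, h4, div_eq_mul_inv, ← Real.exp_neg, ← Real.exp_add, ← Real.exp_add]
        ring_nf
        rw [Real.log_exp]
        ring_nf
      have hexp2 : Real.exp (-2 * lam * b k) = A ^ 2 * Real.exp (-2*x) := by
        have e1 : Real.exp (-2*lam*b k) = Real.exp (-lam*b k) * Real.exp (-lam*b k) := by
          rw [← Real.exp_add]; ring_nf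
        have e2 : Real.exp (-2*x) = Real.exp (-x) * Real.exp (-x) := by
          rw [← Real.exp_add]; ring_nf
        rw [e1, hexp, e2]; ring
      have key' : Real.exp (-x) ≤ (1 + Real.exp (-2*x)) / (2*(1+δ^2/2)) := by
        rw [le_div_iff₀ (by positivity)]
        nlinarith [key]
      have hgeq : g k = t k * A * (1 + Real.exp (-2*x)) / (2*(1+δ^2/2)) := by
        rw [hg]; simp only
        rw [hexp2]
        field_simp
      rw [hexp, hgeq]
      calc t k * (A * Real.exp (-x)) = t k * A * Real.exp (-x) := by ring
        _ ≤ t k * A * ((1 + Real.exp (-2*x)) / (2*(1+δ^2/2))) :=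
            mul_le_mul_of_nonneg_left key' (mul_nonneg (ht k) hApos.le)
        _ = t k * A * (1 + Real.exp (-2*x)) / (2*(1+δ^2/2)) := by ring
    · have : t k = 0 := hk.symm
      rw [hg]; simp only [this]
      simp
  have hlsum : Summable (fun k => t k * Real.exp (-lam * b k)) :=
    Summable.of_nonneg_of_le (fun k => mul_nonneg (ht k) (Real.exp_pos _).le) hle hgsum
  have hmain := Summable.tsum_le_tsum hle hlsum hgsum
  refine hmain.trans ?_
  rw [hg, tsum_div_const, Summable.tsum_add (hsum1.mul_left A) (hsum2.div_const A),
    tsum_mul_left, tsum_div_const]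
  have t1 : A * ∑' k, t k ≤ Real.exp (-c*lam) := by
    calc A * ∑' k, t k ≤ A * 4 := mul_le_mul_of_nonneg_left h1 hApos.le
      _ = Real.exp (-c*lam) := by rw [hA]; ring
  have t2 : (∑' k, t k * Real.exp (-2 * lam * b k)) / A ≤ Real.exp (-c*lam) := by
    rw [div_le_iff₀ hApos, hA]
    calc ∑' k, t k * Real.exp (-2 * lam * b k) ≤ (1/4) * Real.exp (-2*c*lam) := h2
      _ = Real.exp (-c*lam) * (Real.exp (-c*lam)/4) := by
          rw [show (-2*c*lam) = (-c*lam) + (-c*lam) by ring, Real.exp_add]; ring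
  rw [div_le_div_iff₀ (by positivity) hD]
  calc (A * ∑' k, t k + (∑' k, t k * Real.exp (-2*lam*b k))/A) * (1 + δ^2/2)
      ≤ (Real.exp (-c*lam) + Real.exp (-c*lam)) * (1 + δ^2/2) :=
        mul_le_mul_of_nonneg_right (add_le_add t1 t2) hD.le
    _ = Real.exp (-c*lam) * (2 * (1+δ^2/2)) := by ring
end

section
/- Let $n \ge 2$ be a natural number, $C \ge 1$, and $b : \mathbf{N} \to \mathbf{R}$ a sequence such that for every real $B \ge 1$ the set $\{k : b_k \le B\}$ is finite with cardinality at most $C B^{n-1}$. Then there exists $A > 0$ (depending only on $n$ and $C$) such that: for every $\lambda_0 \in (0, 1/2)$ there is a $\lambda \in [\lambda_0/2, \lambda_0]$ with the property that for every $t : \mathbf{N} \to [0,\infty)$ with $\sum_k t_k$ and $\sum_k t_k e^{-2\lambda b_k}$ convergent, $\sum_k t_k \le 4$, and $\sum_k t_k e^{-2\lambda b_k} \le \frac{1}{4}e^{-2(n+2)\lambda}$, one has $\sum_k t_k e^{-\lambda b_k} \le (1 - \lambda^{A})\, e^{-(n+2)\lambda}$. -/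
lemma cosh_lb (x : ℝ) (hx : 0 ≤ x) : 1 + x^2/2 ≤ Real.cosh x := by
  have h1 : x/2 ≤ Real.sinh (x/2) := by
    rcases eq_or_lt_of_le hx with h | h
    · simp [← h]
    · exact (Real.self_lt_sinh_iff.mpr (by linarith)).le
  have h2 : Real.cosh x = 2 * Real.sinh (x/2)^2 + 1 := by
    have ha := Real.cosh_two_mul (x/2)
    have hb := Real.cosh_sq (x/2)
    rw [show x = 2*(x/2) by ring, ha, hb]; ring
  nlinarith [h1]

lemma ptwise (lam bk ν η : ℝ) (hη : 0 ≤ η)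
    (h : η ≤ |lam*bk - ν*lam - Real.log 4|) :
    Real.exp (-lam*bk) * Real.cosh η ≤
      (1/8) * Real.exp (-ν*lam) + 2 * Real.exp (ν*lam) * Real.exp (-2*lam*bk) := by
  have h4 : Real.exp (Real.log 4) = 4 := Real.exp_log (by norm_num)
  have key : Real.exp (-lam*bk) * Real.cosh (lam*bk - ν*lam - Real.log 4) =
      (1/8) * Real.exp (-ν*lam) + 2 * Real.exp (ν*lam) * Real.exp (-2*lam*bk) := by
    rw [Real.cosh_eq]
    have e1 : Real.exp (-lam*bk) * Real.exp (lam*bk - ν*lam - Real.log 4)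
        = Real.exp (-ν*lam) * (Real.exp (Real.log 4))⁻¹ := by
      rw [← Real.exp_neg, ← Real.exp_add, ← Real.exp_add]; ring_nf
    have e2 : Real.exp (-lam*bk) * Real.exp (-(lam*bk - ν*lam - Real.log 4))
        = Real.exp (-2*lam*bk) * Real.exp (ν*lam) * Real.exp (Real.log 4) := by
      rw [← Real.exp_add, ← Real.exp_add, ← Real.exp_add]; ring_nf
    have hsplit : Real.exp (-lam*bk) * ((Real.exp (lam*bk - ν*lam - Real.log 4) +
        Real.exp (-(lam*bk - ν*lam - Real.log 4))) / 2)
        = (Real.exp (-lam*bk) * Real.exp (lam*bk - ν*lam - Real.log 4)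
          + Real.exp (-lam*bk) * Real.exp (-(lam*bk - ν*lam - Real.log 4))) / 2 := by ring
    rw [hsplit, e1, e2, h4]; ring
  rw [← key]
  have hc : Real.cosh η ≤ Real.cosh (lam*bk - ν*lam - Real.log 4) := by
    rw [Real.cosh_le_cosh]
    rwa [abs_of_nonneg hη]
  exact mul_le_mul_of_nonneg_left hc (Real.exp_pos _).le

lemma final_ineq (a h X : ℝ) (hX : 1 + h^2/2 ≤ X) (ha : a ≤ h^2/3) (h0 : 0 ≤ h)
    (h1 : h ≤ 1) : 1 ≤ (1-a)*X := by
  have h2 : a ≤ 1/3 := by nlinarith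
  have h3 : (1 - h^2/3) * (1 + h^2/2) ≤ (1-a)*X := by nlinarith
  nlinarith [sq_nonneg h, sq_nonneg (h*h)]

set_option maxHeartbeats 1000000 in
theorem stmt_16 (n : ℕ) (hn : 2 ≤ n) (C : ℝ) (hC : 1 ≤ C) (b : ℕ → ℝ)
    (hcount : ∀ B : ℝ, 1 ≤ B → ({k : ℕ | b k ≤ B}).Finite ∧
      ({k : ℕ | b k ≤ B}).ncard ≤ C * B ^ ((n : ℝ) - 1)) :
    ∃ A : ℝ, 0 < A ∧ ∀ lam0 : ℝ, lam0 ∈ Set.Ioo (0 : ℝ) (1 / 2) →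
      ∃ lam ∈ Set.Icc (lam0 / 2) lam0,
        ∀ t : ℕ → ℝ, (∀ k, 0 ≤ t k) → Summable t →
          Summable (fun k => t k * Real.exp (-2 * lam * b k)) →
          (∑' k, t k) ≤ 4 →
          (∑' k, t k * Real.exp (-2 * lam * b k)) ≤ (1 / 4) * Real.exp (-2 * ((n : ℝ) + 2) * lam) →
          (∑' k, t k * Real.exp (-lam * b k)) ≤ (1 - lam ^ A) * Real.exp (-((n : ℝ) + 2) * lam) := by
  have hlog : 0 < Real.log 4 := Real.log_pos (by norm_num)
  have hlog3 : Real.log 4 ≤ 3 := by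
    have := Real.log_le_sub_one_of_pos (show (0:ℝ) < 4 by norm_num)
    linarith
  set K : ℝ := 2 * Real.log 4 + n + 3 with hKdef
  have hK1 : (1:ℝ) ≤ K := by
    have : (0:ℝ) ≤ (n:ℝ) := Nat.cast_nonneg n
    simp only [hKdef]; linarith
  have hKpow : (1:ℝ) ≤ K^(n-1) := one_le_pow₀ hK1
  set c : ℝ := Real.log 4 / (8 * C * K^(n-1)) with hcdef
  have hden : (0:ℝ) < 8 * C * K^(n-1) := by positivity
  have hc0 : 0 < c := div_pos hlog hden
  have hc1 : c ≤ 1 := by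
    rw [hcdef, div_le_one hden]
    nlinarith
  obtain ⟨m, hm⟩ := exists_pow_lt_of_lt_one (show (0:ℝ) < c^2/12 by positivity)
    (show (1:ℝ)/2 < 1 by norm_num)
  set q : ℕ := n - 1 with hqdef
  have hq1 : 1 ≤ q := by omega
  refine ⟨((2*q+m : ℕ) : ℝ), by positivity, ?_⟩
  rintro lam0 ⟨hl0, hl2⟩
  set B : ℝ := 2*Real.log 4/lam0 + n + 3 with hBdef
  have hB1 : (1:ℝ) ≤ B := by
    have h1 : 0 < 2*Real.log 4/lam0 := by positivity
    have : (0:ℝ) ≤ (n:ℝ) := Nat.cast_nonneg n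
    simp only [hBdef]; linarith
  obtain ⟨hSfin, hScard⟩ := hcount B hB1
  set N : ℕ := ({k : ℕ | b k ≤ B}).ncard with hNdef
  have hrpow : B ^ ((n:ℝ)-1) = B ^ (n-1) := by
    rw [show ((n:ℝ)-1) = ((n-1:ℕ):ℝ) by rw [Nat.cast_sub (by omega)]; norm_num,
      Real.rpow_natCast]
  have hN : (N:ℝ) ≤ C * B^(n-1) := by rw [← hrpow]; exact hScard
  have hBK : B ≤ K / lam0 := by
    have h1 : K / lam0 = 2*Real.log 4/lam0 + ((n:ℝ)+3)/lam0 := by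
      rw [hKdef]; field_simp; ring
    have h2 : (n:ℝ)+3 ≤ ((n:ℝ)+3)/lam0 := by
      rw [le_div_iff₀ hl0]
      have : (0:ℝ) ≤ (n:ℝ) := Nat.cast_nonneg n
      nlinarith
    simp only [hBdef]; linarith
  have hB0 : (0:ℝ) ≤ B := by linarith
  have hNb : (N:ℝ) ≤ C * K^(n-1) / lam0^(n-1) := by
    calc (N:ℝ) ≤ C * B^(n-1) := hN
    _ ≤ C * (K/lam0)^(n-1) := by
        have := pow_le_pow_left₀ hB0 hBK (n-1)
        nlinarith [pow_nonneg hB0 (n-1)]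
    _ = C * K^(n-1) / lam0^(n-1) := by rw [div_pow]; ring
  set ε : ℝ := c * lam0^(n-2) with hεdef
  have hε0 : 0 < ε := by positivity
  have hε1 : ε ≤ 1 := by
    have h1 : lam0^(n-2) ≤ 1 := pow_le_one₀ hl0.le (by linarith)
    calc ε ≤ 1 * lam0^(n-2) := by rw [hεdef]; nlinarith [pow_nonneg hl0.le (n-2)]
    _ ≤ 1 := by linarith
  have hNε : (N:ℝ) * ε ≤ Real.log 4 / (8*lam0) := by
    have hps : lam0^(n-1) = lam0^(n-2)*lam0 := by
      rw [← pow_succ]; congr 1; omega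
    have hKne : K^(n-1) ≠ 0 := by positivity
    have hCne : C ≠ 0 := by linarith
    have hlne : lam0 ≠ 0 := ne_of_gt hl0
    have hlpne : lam0^(n-2) ≠ 0 := pow_ne_zero _ hlne
    have hRHS : (C*K^(n-1)/lam0^(n-1)) * ε = Real.log 4/(8*lam0) := by
      rw [hεdef, hps, hcdef]
      field_simp
      ring
    calc (N:ℝ) * ε ≤ (C*K^(n-1)/lam0^(n-1)) * ε :=
          mul_le_mul_of_nonneg_right hNb hε0.le
    _ = Real.log 4/(8*lam0) := hRHS
  -- pigeonhole to find x
  set F : Finset ℕ := hSfin.toFinset with hFdef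
  have hcardF : F.card = N := (Set.ncard_eq_toFinset_card _ hSfin).symm
  have hIvol : MeasureTheory.volume (Set.Icc (Real.log 4/lam0) (2*Real.log 4/lam0))
      = ENNReal.ofReal (Real.log 4/lam0) := by
    rw [Real.volume_Icc]; congr 1; ring
  have hUvol : MeasureTheory.volume (⋃ k ∈ F, Metric.closedBall (b k - ((n:ℝ)+2)) ε)
      ≤ ENNReal.ofReal ((N:ℝ) * (2*ε)) := by
    calc MeasureTheory.volume (⋃ k ∈ F, Metric.closedBall (b k - ((n:ℝ)+2)) ε)
        ≤ ∑ k ∈ F, MeasureTheory.volume (Metric.closedBall (b k - ((n:ℝ)+2)) ε) :=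
          MeasureTheory.measure_biUnion_finset_le F _
    _ = F.card • ENNReal.ofReal (2*ε) := by
          rw [Finset.sum_congr rfl (fun k _ => Real.volume_closedBall _ ε), Finset.sum_const]
    _ = ENNReal.ofReal ((N:ℝ) * (2*ε)) := by
          rw [hcardF, nsmul_eq_mul, ← ENNReal.ofReal_natCast N,
            ← ENNReal.ofReal_mul (by positivity : (0:ℝ) ≤ (N:ℝ))]
  have hlt : ENNReal.ofReal ((N:ℝ) * (2*ε)) < ENNReal.ofReal (Real.log 4/lam0) := by
    rw [ENNReal.ofReal_lt_ofReal_iff (by positivity)]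
    have h1 : (N:ℝ)*(2*ε) ≤ Real.log 4/(4*lam0) := by
      have : Real.log 4/(4*lam0) = 2 * (Real.log 4/(8*lam0)) := by ring
      rw [this]; linarith
    have h2 : Real.log 4/(4*lam0) < Real.log 4/lam0 := by
      rw [div_lt_div_iff₀ (by positivity) hl0]; nlinarith
    linarith
  have hns : ¬ (Set.Icc (Real.log 4/lam0) (2*Real.log 4/lam0) ⊆
      ⋃ k ∈ F, Metric.closedBall (b k - ((n:ℝ)+2)) ε) := by
    intro hsub
    have := (MeasureTheory.measure_mono hsub).trans hUvol
    rw [hIvol] at this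
    exact absurd (lt_of_le_of_lt this hlt) (lt_irrefl _)
  obtain ⟨x, hxI, hxU⟩ := Set.not_subset.mp hns
  obtain ⟨hxlo, hxhi⟩ := hxI
  have hx0 : 0 < x := lt_of_lt_of_le (by positivity) hxlo
  set lam : ℝ := Real.log 4 / x with hlamdef
  have hlam0 : 0 < lam := by positivity
  have hlamx : lam * x = Real.log 4 := by
    rw [hlamdef]; field_simp
  have hlam_lo : lam0/2 ≤ lam := by
    rw [hlamdef, le_div_iff₀ hx0]
    have h := (le_div_iff₀ hl0).mp hxhi
    nlinarith
  have hlam_hi : lam ≤ lam0 := by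
    rw [hlamdef, div_le_iff₀ hx0]
    have h := (div_le_iff₀ hl0).mp hxlo
    nlinarith
  have hlamhalf : lam ≤ 1/2 := by linarith
  set η : ℝ := lam0/2 * ε with hηdef
  have hη0 : 0 < η := by positivity
  have hη1 : η ≤ 1 := by nlinarith
  -- separation
  have hsep : ∀ k, η ≤ |lam * b k - ((n:ℝ)+2)*lam - Real.log 4| := by
    intro k
    by_cases hk : b k ≤ B
    · have hkF : k ∈ F := hSfin.mem_toFinset.mpr hk
      have hnb : x ∉ Metric.closedBall (b k - ((n:ℝ)+2)) ε := fun h =>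
        hxU (Set.mem_biUnion hkF h)
      rw [Metric.mem_closedBall, Real.dist_eq, not_le] at hnb
      have heq : lam * b k - ((n:ℝ)+2)*lam - Real.log 4 = lam * (b k - ((n:ℝ)+2) - x) := by
        rw [← hlamx]; ring
      rw [heq, abs_mul, abs_of_pos hlam0]
      have habs : ε < |b k - ((n:ℝ)+2) - x| := by
        rwa [abs_sub_comm] at hnb
      calc η = lam0/2 * ε := rfl
      _ ≤ lam * ε := by nlinarith
      _ ≤ lam * |b k - ((n:ℝ)+2) - x| := by nlinarith
    · push_neg at hk
      have hbk2 : ((n:ℝ)+2) < b k := by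
        have : ((n:ℝ)+2) < B := by
          have h1 : 0 < 2*Real.log 4/lam0 := by positivity
          simp only [hBdef]; linarith
        linarith
      have hBeq : (lam0/2)*(B - ((n:ℝ)+2)) = Real.log 4 + lam0/2 := by
        simp only [hBdef]; field_simp; ring
      have hlow : η ≤ lam * b k - ((n:ℝ)+2)*lam - Real.log 4 := by
        have h1 : (lam0/2) * (b k - ((n:ℝ)+2)) ≤ lam * (b k - ((n:ℝ)+2)) :=
          mul_le_mul_of_nonneg_right hlam_lo (by linarith)
        have h2 : (lam0/2)*(B - ((n:ℝ)+2)) ≤ (lam0/2)*(b k - ((n:ℝ)+2)) :=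
          mul_le_mul_of_nonneg_left (by linarith) (by linarith)
        have h3 : η ≤ lam0/2 := by
          calc η = lam0/2 * ε := rfl
          _ ≤ lam0/2 * 1 := mul_le_mul_of_nonneg_left hε1 (by linarith)
          _ = lam0/2 := mul_one _
        have hexp : lam * (b k - ((n:ℝ)+2)) = lam * b k - ((n:ℝ)+2)*lam := by ring
        linarith [h1, h2, h3, hexp, hBeq]
      exact le_trans hlow (le_abs_self _)
  refine ⟨lam, ⟨hlam_lo, hlam_hi⟩, ?_⟩
  intro t ht hsum1 hsum2 hts1 hts2
  set D : ℝ := Real.exp (-((n:ℝ)+2)*lam) with hDdef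
  have hD0 : 0 < D := Real.exp_pos _
  set Di : ℝ := Real.exp (((n:ℝ)+2)*lam) with hDidef
  have hDi0 : 0 < Di := Real.exp_pos _
  have hDDi : D * Di = 1 := by
    rw [hDdef, hDidef, ← Real.exp_add, show -((n:ℝ)+2)*lam + ((n:ℝ)+2)*lam = 0 by ring,
      Real.exp_zero]
  have hcoshpos : 0 < Real.cosh η := Real.cosh_pos η
  -- pointwise bound
  have hpt : ∀ k, t k * Real.exp (-lam * b k) ≤
      (Real.cosh η)⁻¹ * ((1/8) * D * t k + 2 * Di * (t k * Real.exp (-2*lam*b k))) := by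
    intro k
    have h := ptwise lam (b k) ((n:ℝ)+2) η hη0.le (hsep k)
    rw [← hDdef, ← hDidef] at h
    have h2 : Real.exp (-lam * b k) ≤
        (Real.cosh η)⁻¹ * ((1/8) * D + 2 * Di * Real.exp (-2*lam*b k)) := by
      rw [le_inv_mul_iff₀ hcoshpos]
      linarith [h]
    calc t k * Real.exp (-lam * b k)
        ≤ t k * ((Real.cosh η)⁻¹ * ((1/8) * D + 2 * Di * Real.exp (-2*lam*b k))) :=
          mul_le_mul_of_nonneg_left h2 (ht k)
    _ = (Real.cosh η)⁻¹ * ((1/8) * D * t k + 2 * Di * (t k * Real.exp (-2*lam*b k))) := by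
          ring
  -- summability of majorant
  have hsumMaj : Summable (fun k => (Real.cosh η)⁻¹ *
      ((1/8) * D * t k + 2 * Di * (t k * Real.exp (-2*lam*b k)))) := by
    apply Summable.mul_left
    exact ((hsum1.mul_left ((1/8)*D)).add (hsum2.mul_left (2*Di)))
  have hg0 : ∀ k, 0 ≤ t k * Real.exp (-lam * b k) := fun k =>
    mul_nonneg (ht k) (Real.exp_pos _).le
  have hsumg : Summable (fun k => t k * Real.exp (-lam * b k)) :=
    Summable.of_nonneg_of_le hg0 hpt hsumMaj
  have htsum : (∑' k, t k * Real.exp (-lam * b k)) ≤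
      (Real.cosh η)⁻¹ * ((1/8) * D * (∑' k, t k)
        + 2 * Di * (∑' k, t k * Real.exp (-2*lam*b k))) := by
    calc (∑' k, t k * Real.exp (-lam * b k))
        ≤ ∑' k, (Real.cosh η)⁻¹ *
            ((1/8) * D * t k + 2 * Di * (t k * Real.exp (-2*lam*b k))) :=
          Summable.tsum_le_tsum hpt hsumg hsumMaj
    _ = (Real.cosh η)⁻¹ * ((1/8) * D * (∑' k, t k)
        + 2 * Di * (∑' k, t k * Real.exp (-2*lam*b k))) := by
          rw [tsum_mul_left]
          congr 1
          rw [Summable.tsum_add (hsum1.mul_left ((1/8)*D)) (hsum2.mul_left (2*Di)),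
            tsum_mul_left, tsum_mul_left]
  have hT0 : 0 ≤ ∑' k, t k := tsum_nonneg ht
  have hT20 : 0 ≤ ∑' k, t k * Real.exp (-2*lam*b k) :=
    tsum_nonneg (fun k => mul_nonneg (ht k) (Real.exp_pos _).le)
  have hDsq : Real.exp (-2*((n:ℝ)+2)*lam) = D^2 := by
    rw [hDdef, sq, ← Real.exp_add]; congr 1; ring
  have hts2' : (∑' k, t k * Real.exp (-2*lam*b k)) ≤ (1/4) * D^2 := by
    rw [← hDsq]
    exact hts2
  have hmain : (∑' k, t k * Real.exp (-lam * b k)) ≤ (Real.cosh η)⁻¹ * D := by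
    calc (∑' k, t k * Real.exp (-lam * b k))
        ≤ (Real.cosh η)⁻¹ * ((1/8) * D * (∑' k, t k)
            + 2 * Di * (∑' k, t k * Real.exp (-2*lam*b k))) := htsum
    _ ≤ (Real.cosh η)⁻¹ * ((1/8) * D * 4 + 2 * Di * ((1/4) * D^2)) := by
          apply mul_le_mul_of_nonneg_left _ (inv_nonneg.mpr hcoshpos.le)
          have h1 : (1/8) * D * (∑' k, t k) ≤ (1/8) * D * 4 :=
            mul_le_mul_of_nonneg_left hts1 (by positivity)
          have h2 : 2 * Di * (∑' k, t k * Real.exp (-2*lam*b k))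
              ≤ 2 * Di * ((1/4) * D^2) :=
            mul_le_mul_of_nonneg_left hts2' (by positivity)
          linarith
    _ = (Real.cosh η)⁻¹ * D := by
          have : (1/8) * D * 4 + 2 * Di * ((1/4) * D^2) = D * (1/2) + (D*Di) * D * (1/2) := by
            ring
          rw [this, hDDi]; ring
  -- exponent bound
  have hpowA : lam ^ ((2*q+m : ℕ) : ℝ) ≤ η^2/3 := by
    rw [Real.rpow_natCast]
    have hql : lam^(n-2) ≤ lam0^(n-2) := pow_le_pow_left₀ hlam0.le hlam_hi (n-2)
    have hηlb : 0 ≤ (c/2) * lam^q := by positivity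
    have hη_ge : (c/2) * lam^q ≤ η := by
      have hq : lam^q = lam^(n-2) * lam := by rw [← pow_succ]; congr 1; omega
      have h1 : η = (lam0/2) * (c * lam0^(n-2)) := rfl
      have h2 : (c/2) * lam^q = (lam/2) * (c * lam^(n-2)) := by rw [hq]; ring
      rw [h1, h2]
      have hA : (lam/2) * (c * lam^(n-2)) ≤ (lam0/2) * (c * lam^(n-2)) :=
        mul_le_mul_of_nonneg_right (by linarith) (by positivity)
      have hB : (lam0/2) * (c * lam^(n-2)) ≤ (lam0/2) * (c * lam0^(n-2)) :=
        mul_le_mul_of_nonneg_left (mul_le_mul_of_nonneg_left hql hc0.le) (by linarith)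
      linarith
    have hsq : ((c/2) * lam^q)^2 ≤ η^2 := pow_le_pow_left₀ hηlb hη_ge 2
    have hsplit : lam^(2*q+m) = (lam^q)^2 * lam^m := by
      rw [pow_add, pow_mul]; ring_nf
    have hlm : lam^m ≤ (1/2)^m := pow_le_pow_left₀ hlam0.le hlamhalf m
    have hlm2 : lam^m ≤ c^2/12 := le_trans hlm hm.le
    have hq0 : 0 ≤ (lam^q)^2 := sq_nonneg _
    rw [hsplit]
    have hstep : (lam^q)^2 * lam^m ≤ (lam^q)^2 * (c^2/12) :=
      mul_le_mul_of_nonneg_left hlm2 hq0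
    have h6 : (lam^q)^2 * (c^2/12) = (((c/2) * lam^q)^2)/3 := by ring
    linarith
  have hfinal : (Real.cosh η)⁻¹ ≤ 1 - lam ^ ((2*q+m : ℕ) : ℝ) := by
    have hcosh := cosh_lb η hη0.le
    have ha : lam ^ ((2*q+m : ℕ) : ℝ) ≤ η^2/3 := hpowA
    have hapos : 0 < lam ^ ((2*q+m : ℕ) : ℝ) := Real.rpow_pos_of_pos hlam0 _
    rw [inv_le_iff_one_le_mul₀ hcoshpos]
    exact final_ineq _ _ _ hcosh ha hη0.le hη1
  calc (∑' k, t k * Real.exp (-lam * b k)) ≤ (Real.cosh η)⁻¹ * D := hmain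
  _ ≤ (1 - lam ^ ((2*q+m : ℕ) : ℝ)) * D := mul_le_mul_of_nonneg_right hfinal hD0.le
end
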